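/- arXiv:1509.08966 — 4 statements merged into one kernel-verified Lean document; each statement's English description precedes it below -/
import Mathlib

section
/- Let G be a simply connected nilpotent Lie group in logarithmic coordinates ℝ^m with adapted basis of degrees d₁, …, d_m and quasi-norm |g|_m = max_i |x_i|^{1/d_i}. If g_n, h_n ∈ G are sequences with |g_n|_m = o(n) and |h_n|_m = O(n), then the commutators satisfy |g_n^{-1} h_n^{-1} g_n h_n|_m = o(n). -/
open Filter Asymptotics MvPolynomial

/-!
Measure coordinate `i` against `n ^ d i`: the hypotheses say that every coordinate of `gₙ` is
`o(n ^ dᵢ)` and every coordinate of `hₙ` is `O(n ^ dᵢ)`, and the conclusion is the same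
`o(n ^ dᵢ)` bound for the commutator. A coordinate of the group law is a polynomial of weighted
degree at most `dₜ`, so expanding each monomial telescopically shows that multiplying two pairs
of sequences that are `O(n ^ d)` and differ by `o(n ^ d)` gives again such a pair. The commutator
is built from the group law and negation, so replacing `gₙ` by `0` changes it only by
`o(n ^ d)`; and the commutator of `0` with `hₙ` is `0`.
-/

theorem Asymptotics.IsLittleO.multisetProd_sub {α ι R 𝕜 : Type*} [SeminormedCommRing R]
    [NormedField 𝕜] {l : Filter α} {s : Multiset ι} {f f' : ι → α → R} {g : ι → α → 𝕜}
    (hf : ∀ i ∈ s, f i =O[l] g i) (hf' : ∀ i ∈ s, f' i =O[l] g i)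
    (hff' : ∀ i ∈ s, (f i - f' i) =o[l] g i) :
    (fun x ↦ (s.map (f · x)).prod - (s.map (f' · x)).prod) =o[l]
      fun x ↦ (s.map (g · x)).prod := by
  induction s using Multiset.induction_on with
  | empty =>
    simp only [Multiset.map_zero, Multiset.prod_zero, sub_self]
    exact isLittleO_zero _ _
  | cons i s ih =>
    simp only [Multiset.forall_mem_cons] at hf hf' hff'
    simp only [Multiset.map_cons, Multiset.prod_cons]
    have telescope : ∀ a a' p p' : R, a * p - a' * p' = (a - a') * p + a' * (p - p') := by
      intros; ring
    simp only [telescope]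
    exact (hff'.1.mul_isBigO (.multisetProd hf.2)).add
      (hf'.1.mul_isLittleO (ih hf.2 hf'.2 hff'.2))

theorem isBigO_natCast_pow_of_le {a b : ℕ} (hab : a ≤ b) :
    (fun n : ℕ ↦ (n : ℝ) ^ a) =O[atTop] fun n ↦ (n : ℝ) ^ b :=
  .of_bound 1 <| (eventually_ge_atTop 1).mono fun n hn ↦ by
    have hn : (1 : ℝ) ≤ n := mod_cast hn
    simpa [abs_of_nonneg] using pow_le_pow_right₀ hn hab

theorem Finsupp.prod_map_toMultiset {σ M : Type*} [CommMonoid M] (v : σ →₀ ℕ) (f : σ → M) :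
    (v.toMultiset.map f).prod = v.prod fun s k ↦ f s ^ k := by
  simp [Finsupp.toMultiset_map, Finsupp.prod_toMultiset, Finsupp.prod_mapDomain_index, pow_add]

theorem Finsupp.prod_map_pow_toMultiset {σ M : Type*} [CommMonoid M] (w : σ → ℕ) (v : σ →₀ ℕ)
    (x : M) : (v.toMultiset.map fun s ↦ x ^ w s).prod = x ^ Finsupp.weight w v := by
  simp [Finsupp.prod_map_toMultiset, Finsupp.weight_apply, Finsupp.prod, Finsupp.sum, ← pow_mul,
    Finset.prod_pow_eq_pow_sum, mul_comm]

theorem MvPolynomial.eval_eq_sum_prod_toMultiset {σ R : Type*} [CommSemiring R] (z : σ → R)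
    (P : MvPolynomial σ R) :
    eval z P = ∑ v ∈ P.support, coeff v P * (v.toMultiset.map z).prod := by
  simp only [eval_eq, Finsupp.prod_map_toMultiset]
  rfl

namespace WeightedGrowth

variable {σ ι : Type*}

def WeightedBigO (w : σ → ℕ) (z : ℕ → σ → ℝ) : Prop :=
  ∀ s, (fun n ↦ z n s) =O[atTop] fun n ↦ (n : ℝ) ^ w s

def WeightedLittleO (w : σ → ℕ) (z : ℕ → σ → ℝ) : Prop :=
  ∀ s, (fun n ↦ z n s) =o[atTop] fun n ↦ (n : ℝ) ^ w s

structure WeightedApprox (w : σ → ℕ) (z z' : ℕ → σ → ℝ) : Prop where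
  weightedBigO_left : WeightedBigO w z
  weightedBigO_right : WeightedBigO w z'
  weightedLittleO_sub : WeightedLittleO w (z - z')

theorem WeightedLittleO.weightedBigO {w : σ → ℕ} {z : ℕ → σ → ℝ} (hz : WeightedLittleO w z) :
    WeightedBigO w z :=
  fun s ↦ (hz s).isBigO

theorem WeightedBigO.weightedApprox_self {w : σ → ℕ} {z : ℕ → σ → ℝ} (hz : WeightedBigO w z) :
    WeightedApprox w z z :=
  ⟨hz, hz, fun s ↦ by simp⟩

theorem WeightedLittleO.weightedApprox_zero {w : σ → ℕ} {z : ℕ → σ → ℝ}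
    (hz : WeightedLittleO w z) : WeightedApprox w z 0 :=
  ⟨hz.weightedBigO, fun _ ↦ isBigO_zero _ _, by rwa [sub_zero]⟩

theorem WeightedApprox.neg {w : σ → ℕ} {z z' : ℕ → σ → ℝ} (h : WeightedApprox w z z') :
    WeightedApprox w (-z) (-z') :=
  ⟨fun s ↦ (h.weightedBigO_left s).neg_left, fun s ↦ (h.weightedBigO_right s).neg_left,
    fun s ↦ (h.weightedLittleO_sub s).neg_left.congr_left fun n ↦ by
      simp only [Pi.sub_apply, Pi.neg_apply]; ring⟩

theorem WeightedApprox.sumElim {w : σ → ℕ} {w' : ι → ℕ} {a a' : ℕ → σ → ℝ} {b b' : ℕ → ι → ℝ}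
    (ha : WeightedApprox w a a') (hb : WeightedApprox w' b b') :
    WeightedApprox (Sum.elim w w') (fun n ↦ Sum.elim (a n) (b n))
      (fun n ↦ Sum.elim (a' n) (b' n)) := by
  refine ⟨?_, ?_, ?_⟩ <;> rintro (s | s)
  exacts [ha.weightedBigO_left s, hb.weightedBigO_left s, ha.weightedBigO_right s,
    hb.weightedBigO_right s, ha.weightedLittleO_sub s, hb.weightedLittleO_sub s]

variable {w : σ → ℕ} {P : MvPolynomial σ ℝ} {D : ℕ}

theorem WeightedBigO.isBigO_eval (hP : P.weightedTotalDegree w ≤ D) {z : ℕ → σ → ℝ}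
    (hz : WeightedBigO w z) : (fun n ↦ eval (z n) P) =O[atTop] fun n ↦ (n : ℝ) ^ D := by
  simp only [eval_eq_sum_prod_toMultiset]
  refine .fun_sum fun v hv ↦ .const_mul_left ?_ _
  have hmono := IsBigO.multisetProd (s := v.toMultiset) fun s _ ↦ hz s
  simp only [Finsupp.prod_map_pow_toMultiset] at hmono
  exact hmono.trans (isBigO_natCast_pow_of_le ((le_weightedTotalDegree w hv).trans hP))

theorem WeightedApprox.isLittleO_eval_sub (hP : P.weightedTotalDegree w ≤ D)
    {z z' : ℕ → σ → ℝ} (hz : WeightedApprox w z z') :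
    (fun n ↦ eval (z n) P - eval (z' n) P) =o[atTop] fun n ↦ (n : ℝ) ^ D := by
  simp only [eval_eq_sum_prod_toMultiset, ← Finset.sum_sub_distrib, ← mul_sub]
  refine .fun_sum fun v hv ↦ .const_mul_left ?_ _
  have hmono := IsLittleO.multisetProd_sub (s := v.toMultiset)
    (fun s _ ↦ hz.weightedBigO_left s) (fun s _ ↦ hz.weightedBigO_right s)
    (fun s _ ↦ hz.weightedLittleO_sub s)
  simp only [Finsupp.prod_map_pow_toMultiset] at hmono
  exact hmono.trans_isBigO (isBigO_natCast_pow_of_le ((le_weightedTotalDegree w hv).trans hP))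

def IsWeightedPolynomialLaw (d : ι → ℕ) (mul : (ι → ℝ) → (ι → ℝ) → ι → ℝ) : Prop :=
  ∀ t, ∃ P : MvPolynomial (ι ⊕ ι) ℝ,
    (∀ x y, mul x y t = eval (Sum.elim x y) P) ∧ P.weightedTotalDegree (Sum.elim d d) ≤ d t

theorem IsWeightedPolynomialLaw.weightedApprox {d : ι → ℕ} {mul : (ι → ℝ) → (ι → ℝ) → ι → ℝ}
    (hmul : IsWeightedPolynomialLaw d mul) {a a' b b' : ℕ → ι → ℝ}
    (ha : WeightedApprox d a a') (hb : WeightedApprox d b b') :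
    WeightedApprox d (fun n ↦ mul (a n) (b n)) (fun n ↦ mul (a' n) (b' n)) := by
  have hab := ha.sumElim hb
  refine ⟨fun t ↦ ?_, fun t ↦ ?_, fun t ↦ ?_⟩ <;> obtain ⟨P, hPeval, hPdeg⟩ := hmul t <;>
    simp only [Pi.sub_apply, hPeval]
  exacts [hab.weightedBigO_left.isBigO_eval hPdeg, hab.weightedBigO_right.isBigO_eval hPdeg,
    hab.isLittleO_eval_sub hPdeg]

theorem IsWeightedPolynomialLaw.weightedLittleO_commutator {d : ι → ℕ}
    {mul : (ι → ℝ) → (ι → ℝ) → ι → ℝ} (hmul : IsWeightedPolynomialLaw d mul)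
    (hmul_zero : ∀ x, mul x 0 = x) (hzero_mul : ∀ x, mul 0 x = x)
    (hneg_mul : ∀ x, mul (-x) x = 0) {g h : ℕ → ι → ℝ}
    (hg : WeightedLittleO d g) (hh : WeightedBigO d h) :
    WeightedLittleO d fun n ↦ mul (mul (mul (-g n) (-h n)) (g n)) (h n) := by
  have hg0 := hg.weightedApprox_zero
  have hhh := hh.weightedApprox_self
  have := hmul.weightedApprox (hmul.weightedApprox (hmul.weightedApprox hg0.neg hhh.neg) hg0) hhh
  intro t
  simpa [hmul_zero, hzero_mul, hneg_mul] using this.weightedLittleO_sub t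

section QuasiNorm

variable [Finite ι] {d : ι → ℕ}

noncomputable def quasiNorm (d : ι → ℕ) (x : ι → ℝ) : ℝ :=
  ⨆ i, |x i| ^ ((d i : ℝ)⁻¹)

theorem quasiNorm_le_iff (hd : ∀ i, 0 < d i) {x : ι → ℝ} {r : ℝ} (hr : 0 ≤ r) :
    quasiNorm d x ≤ r ↔ ∀ i, |x i| ≤ r ^ d i := by
  have hcoord : ∀ i, |x i| ^ ((d i : ℝ)⁻¹) ≤ r ↔ |x i| ≤ r ^ d i := fun i ↦ by
    rw [Real.rpow_inv_le_iff_of_pos (abs_nonneg _) hr (mod_cast hd i), Real.rpow_natCast]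
  refine ⟨fun h i ↦ (hcoord i).1 ((le_ciSup (Finite.bddAbove_range _) i).trans h),
    fun h ↦ Real.iSup_le (fun i ↦ (hcoord i).2 (h i)) hr⟩

theorem abs_le_pow_of_quasiNorm_le (hd : ∀ i, 0 < d i) {x : ι → ℝ} {r : ℝ}
    (h : quasiNorm d x ≤ r) (i : ι) : |x i| ≤ r ^ d i := by
  have hr : 0 ≤ r :=
    (Real.rpow_nonneg (abs_nonneg (x i)) _).trans ((le_ciSup (Finite.bddAbove_range _) i).trans h)
  exact (quasiNorm_le_iff hd hr).1 h i

theorem weightedLittleO_iff (hd : ∀ i, 0 < d i) {z : ℕ → ι → ℝ} :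
    WeightedLittleO d z ↔ ∀ ε : ℝ, 0 < ε → ∀ᶠ n : ℕ in atTop, quasiNorm d (z n) ≤ ε * n := by
  constructor
  · intro hz ε hε
    have hcoord : ∀ i, ∀ᶠ n : ℕ in atTop, |z n i| ≤ (ε * n) ^ d i := fun i ↦
      (isLittleO_iff.1 (hz i) (pow_pos hε (d i))).mono fun n hn ↦ by
        simpa [mul_pow, abs_of_nonneg] using hn
    filter_upwards [eventually_all.2 hcoord] with n hn
    exact (quasiNorm_le_iff hd (by positivity)).2 hn
  · intro hz i
    refine isLittleO_iff.2 fun c hc ↦ ?_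
    set ε := min c 1
    have hε : 0 < ε := lt_min hc one_pos
    have hεc : ε ^ d i ≤ c :=
      (pow_le_of_le_one hε.le (min_le_right _ _) (hd i).ne').trans (min_le_left _ _)
    filter_upwards [hz ε hε] with n hn
    calc ‖z n i‖ ≤ (ε * n) ^ d i := abs_le_pow_of_quasiNorm_le hd hn i
      _ = ε ^ d i * ‖(n : ℝ) ^ d i‖ := by simp [mul_pow]
      _ ≤ c * ‖(n : ℝ) ^ d i‖ := by gcongr

theorem weightedBigO_of_quasiNorm_le (hd : ∀ i, 0 < d i) {z : ℕ → ι → ℝ}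
    (hz : ∃ C : ℝ, ∀ᶠ n : ℕ in atTop, quasiNorm d (z n) ≤ C * n) : WeightedBigO d z := by
  obtain ⟨C, hC⟩ := hz
  intro i
  refine .of_bound (|C| ^ d i) ?_
  filter_upwards [hC] with n hn
  calc ‖z n i‖ ≤ (C * n) ^ d i := abs_le_pow_of_quasiNorm_le hd hn i
    _ ≤ |C * n| ^ d i := (le_abs_self _).trans (abs_pow _ _).le
    _ = |C| ^ d i * ‖(n : ℝ) ^ d i‖ := by simp [abs_mul, mul_pow]

end QuasiNorm

end WeightedGrowth

open WeightedGrowth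

theorem stmt9_general {m : ℕ} (d : Fin m → ℕ) (hd : ∀ i, 1 ≤ d i)
    (mul : (Fin m → ℝ) → (Fin m → ℝ) → (Fin m → ℝ))
    (hone : ∀ x, mul x 0 = x ∧ mul 0 x = x)
    (hinv : ∀ x, mul x (-x) = 0 ∧ mul (-x) x = 0)
    (hpoly : ∀ t : Fin m, ∃ P : MvPolynomial (Fin m ⊕ Fin m) ℝ,
      (∀ x y, mul x y t = MvPolynomial.eval (Sum.elim x y) P) ∧
      P.weightedTotalDegree (Sum.elim d d) ≤ d t)
    (g h : ℕ → Fin m → ℝ)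
    (hg : ∀ ε : ℝ, 0 < ε → ∀ᶠ n : ℕ in atTop,
      (⨆ i : Fin m, |g n i| ^ ((d i : ℝ)⁻¹)) ≤ ε * n)
    (hh : ∃ C : ℝ, ∀ᶠ n : ℕ in atTop,
      (⨆ i : Fin m, |h n i| ^ ((d i : ℝ)⁻¹)) ≤ C * n) :
    ∀ ε : ℝ, 0 < ε → ∀ᶠ n : ℕ in atTop,
      (⨆ i : Fin m,
        |mul (mul (mul (-(g n)) (-(h n))) (g n)) (h n) i| ^ ((d i : ℝ)⁻¹)) ≤ ε * n := by
  have hmul : IsWeightedPolynomialLaw d mul := hpoly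
  have hg' : WeightedLittleO d g := (weightedLittleO_iff hd).2 hg
  have hh' : WeightedBigO d h := weightedBigO_of_quasiNorm_le hd hh
  exact (weightedLittleO_iff hd).1 <| hmul.weightedLittleO_commutator
    (fun x ↦ (hone x).1) (fun x ↦ (hone x).2) (fun x ↦ (hinv x).2) hg' hh'

/-- In logarithmic coordinates `ℝ^m` of a simply connected nilpotent
Lie group (group law `mul` polynomial with weighted degree ≤ `d t` in coordinate `t`,
identity `0`, inverse `-x`), with quasi-norm `max_i |x_i|^(1/dᵢ)`: if `|gₙ|_m = o(n)`
and `|hₙ|_m = O(n)` then `|gₙ⁻¹ hₙ⁻¹ gₙ hₙ|_m = o(n)`. -/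
theorem stmt9 {m : ℕ} (d : Fin m → ℕ) (hd : ∀ i, 1 ≤ d i)
    (mul : (Fin m → ℝ) → (Fin m → ℝ) → (Fin m → ℝ))
    (hassoc : ∀ x y z, mul (mul x y) z = mul x (mul y z))
    (hone : ∀ x, mul x 0 = x ∧ mul 0 x = x)
    (hinv : ∀ x, mul x (-x) = 0 ∧ mul (-x) x = 0)
    (hpoly : ∀ t : Fin m, ∃ P : MvPolynomial (Fin m ⊕ Fin m) ℝ,
      (∀ x y, mul x y t = MvPolynomial.eval (Sum.elim x y) P) ∧
      P.weightedTotalDegree (Sum.elim d d) ≤ d t)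
    (g h : ℕ → Fin m → ℝ)
    (hg : ∀ ε : ℝ, 0 < ε → ∀ᶠ n : ℕ in atTop,
      (⨆ i : Fin m, |g n i| ^ ((d i : ℝ)⁻¹)) ≤ ε * n)
    (hh : ∃ C : ℝ, ∀ᶠ n : ℕ in atTop,
      (⨆ i : Fin m, |h n i| ^ ((d i : ℝ)⁻¹)) ≤ C * n) :
    ∀ ε : ℝ, 0 < ε → ∀ᶠ n : ℕ in atTop,
      (⨆ i : Fin m,
        |mul (mul (mul (-(g n)) (-(h n))) (g n)) (h n) i| ^ ((d i : ℝ)⁻¹)) ≤ ε * n :=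
  stmt9_general d hd mul hone hinv hpoly g h hg hh
end

section
/- Let G_∞ be a Carnot group in logarithmic coordinates ℝ^m, with abelianization coordinates 1,…,d and commutator coordinates d+1,…,m, projections π_ab(a₁,…,a_m) = (a₁,…,a_d,0,…,0) and π_com(a₁,…,a_m) = (0,…,0,a_{d+1},…,a_m), and a homogeneous quasi-norm |·|_∞. If g_n ∈ G_∞ is a sequence with |π_com g_n|_∞ = o(n) and |π_ab g_n|_∞ = O(n), then |(π_ab g_n)^{-1} ⋆ g_n|_∞ = o(n), where ⋆ is the group product. -/
open Filter

lemma aux_poly_bound {σ : Type*} [Fintype σ] [DecidableEq σ]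
    (w : σ → ℕ) (P : MvPolynomial σ ℝ) (D : ℕ)
    (hPd : P.weightedTotalDegree w ≤ D)
    (u v : σ → ℝ) (δ B : ℝ) (hδ0 : 0 ≤ δ) (hδ1 : δ ≤ 1) (hB1 : 1 ≤ B)
    (hu : ∀ j, |u j| ≤ B ^ w j)
    (huv : ∀ j, u j ≠ v j → v j = 0 ∧ |u j| ≤ δ * B ^ w j) :
    |MvPolynomial.eval u P - MvPolynomial.eval v P| ≤
      (∑ μ ∈ P.support, |P.coeff μ|) * (δ * B ^ D) := by
  have hB0 : (0:ℝ) ≤ B := le_trans zero_le_one hB1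
  have hRHS0 : (0:ℝ) ≤ δ * B ^ D := mul_nonneg hδ0 (pow_nonneg hB0 _)
  rw [MvPolynomial.eval_eq, MvPolynomial.eval_eq, ← Finset.sum_sub_distrib]
  calc |∑ μ ∈ P.support, (P.coeff μ * ∏ j ∈ μ.support, u j ^ μ j
          - P.coeff μ * ∏ j ∈ μ.support, v j ^ μ j)|
      ≤ ∑ μ ∈ P.support, |P.coeff μ * ∏ j ∈ μ.support, u j ^ μ j
          - P.coeff μ * ∏ j ∈ μ.support, v j ^ μ j| := Finset.abs_sum_le_sum_abs _ _
    _ ≤ ∑ μ ∈ P.support, |P.coeff μ| * (δ * B ^ D) := by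
        refine Finset.sum_le_sum fun μ hμ => ?_
        rw [← mul_sub, abs_mul]
        refine mul_le_mul_of_nonneg_left ?_ (abs_nonneg _)
        -- key monomial estimate
        by_cases hall : ∀ j ∈ μ.support, u j = v j
        · have : (∏ j ∈ μ.support, u j ^ μ j) = ∏ j ∈ μ.support, v j ^ μ j :=
            Finset.prod_congr rfl fun j hj => by rw [hall j hj]
          rw [this, sub_self, abs_zero]; exact hRHS0
        · push_neg at hall
          obtain ⟨j₀, hj₀s, hj₀⟩ := hall
          obtain ⟨hv0, hu0⟩ := huv j₀ hj₀
          have hμj₀ : μ j₀ ≠ 0 := Finsupp.mem_support_iff.1 hj₀s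
          have hvprod : (∏ j ∈ μ.support, v j ^ μ j) = 0 :=
            Finset.prod_eq_zero hj₀s (by rw [hv0]; exact zero_pow hμj₀)
          rw [hvprod, sub_zero, Finset.abs_prod]
          simp only [abs_pow]
          have step1 : ∀ j ∈ μ.support,
              |u j ^ μ j| ≤ (if j = j₀ then δ else 1) * B ^ (w j * μ j) := by
            intro j hj
            rw [abs_pow]
            by_cases hjj : j = j₀
            · subst hjj
              rw [if_pos rfl]
              calc |u j| ^ μ j ≤ (δ * B ^ w j) ^ μ j :=
                    pow_le_pow_left₀ (abs_nonneg _) hu0 _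
                _ = δ ^ μ j * B ^ (w j * μ j) := by rw [mul_pow, ← pow_mul]
                _ ≤ δ * B ^ (w j * μ j) := by
                    have : δ ^ μ j ≤ δ := pow_le_of_le_one hδ0 hδ1 hμj₀
                    exact mul_le_mul_of_nonneg_right this (pow_nonneg hB0 _)
            · rw [if_neg hjj, one_mul]
              calc |u j| ^ μ j ≤ (B ^ w j) ^ μ j :=
                    pow_le_pow_left₀ (abs_nonneg _) (hu j) _
                _ = B ^ (w j * μ j) := by rw [← pow_mul]
          calc (∏ j ∈ μ.support, |u j| ^ μ j)
              ≤ ∏ j ∈ μ.support, (if j = j₀ then δ else 1) * B ^ (w j * μ j) := by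
                refine Finset.prod_le_prod (fun j _ => by positivity) ?_
                intro j hj
                have := step1 j hj
                rwa [abs_pow] at this
            _ = (∏ j ∈ μ.support, (if j = j₀ then δ else 1))
                  * ∏ j ∈ μ.support, B ^ (w j * μ j) := Finset.prod_mul_distrib
            _ = δ * B ^ (∑ j ∈ μ.support, w j * μ j) := by
                rw [Finset.prod_ite_eq' μ.support j₀ fun _ => δ, if_pos hj₀s,
                  Finset.prod_pow_eq_pow_sum]
            _ ≤ δ * B ^ D := by
                refine mul_le_mul_of_nonneg_left ?_ hδ0
                refine pow_le_pow_right₀ hB1 ?_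
                have hW : (Finsupp.weight w) μ ≤ D :=
                  le_trans (MvPolynomial.le_weightedTotalDegree w hμ) hPd
                have : (∑ j ∈ μ.support, w j * μ j) = (Finsupp.weight w) μ := by
                  rw [Finsupp.weight_apply, Finsupp.sum]
                  exact Finset.sum_congr rfl fun j _ => by
                    rw [smul_eq_mul, mul_comm]
                omega
    _ = (∑ μ ∈ P.support, |P.coeff μ|) * (δ * B ^ D) := by rw [← Finset.sum_mul]

/-- In a Carnot group in logarithmic coordinates `ℝ^m` (group law
`mul` polynomial with weighted degree ≤ `d t` in coordinate `t`, first-layer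
coordinates additive, identity `0`, inverse `-x`), with a homogeneous quasi-norm `N`
(axiomatized as comparable to `max_i |x_i|^(1/dᵢ)`): if `|π_com gₙ|_∞ = o(n)` and
`|π_ab gₙ|_∞ = O(n)` then `|(π_ab gₙ)⁻¹ ⋆ gₙ|_∞ = o(n)`. Abelianization coordinates
are those of degree `1`, so `π_ab x = (if d i = 1 then x i else 0)` and
`π_com x = (if d i = 1 then 0 else x i)`. -/
theorem stmt10 {m : ℕ} (d : Fin m → ℕ) (hd : ∀ i, 1 ≤ d i)
    (mul : (Fin m → ℝ) → (Fin m → ℝ) → (Fin m → ℝ))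
    (hassoc : ∀ x y z, mul (mul x y) z = mul x (mul y z))
    (hone : ∀ x, mul x 0 = x ∧ mul 0 x = x)
    (hinv : ∀ x, mul x (-x) = 0 ∧ mul (-x) x = 0)
    (hpoly : ∀ t : Fin m, ∃ P : MvPolynomial (Fin m ⊕ Fin m) ℝ,
      (∀ x y, mul x y t = MvPolynomial.eval (Sum.elim x y) P) ∧
      P.weightedTotalDegree (Sum.elim d d) ≤ d t)
    (hlin : ∀ t : Fin m, d t = 1 → ∀ x y, mul x y t = x t + y t)
    (N : (Fin m → ℝ) → ℝ)
    (hN : ∃ c₁ : ℝ, 0 < c₁ ∧ ∃ c₂ : ℝ, 0 < c₂ ∧ ∀ x,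
      c₁ * (⨆ i : Fin m, |x i| ^ ((d i : ℝ)⁻¹)) ≤ N x ∧
      N x ≤ c₂ * (⨆ i : Fin m, |x i| ^ ((d i : ℝ)⁻¹)))
    (g : ℕ → Fin m → ℝ)
    (hcom : ∀ ε : ℝ, 0 < ε → ∀ᶠ n : ℕ in atTop,
      N (fun i => if d i = 1 then 0 else g n i) ≤ ε * n)
    (hab : ∃ C : ℝ, ∀ᶠ n : ℕ in atTop,
      N (fun i => if d i = 1 then g n i else 0) ≤ C * n) :
    ∀ ε : ℝ, 0 < ε → ∀ᶠ n : ℕ in atTop,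
      N (mul (-(fun i => if d i = 1 then g n i else 0)) (g n)) ≤ ε * n := by
  obtain ⟨c₁, hc₁, c₂, hc₂, hNx⟩ := hN
  obtain ⟨C, hC⟩ := hab
  have hdne : ∀ i : Fin m, (d i : ℝ) ≠ 0 := fun i =>
    Nat.cast_ne_zero.2 (by have := hd i; omega)
  set K : ℝ := max 1 (C / c₁) with hKdef
  have hK1 : (1:ℝ) ≤ K := le_max_left _ _
  have hK0 : (0:ℝ) ≤ K := le_trans zero_le_one hK1
  -- abelian coordinate bound
  have habs : ∀ᶠ n : ℕ in atTop, ∀ i : Fin m,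
      |(if d i = 1 then g n i else 0 : ℝ)| ≤ (K * n) ^ d i := by
    filter_upwards [hC] with n hn i
    have h1 := (hNx fun i => if d i = 1 then g n i else 0).1
    have hsup : (⨆ i : Fin m, |(if d i = 1 then g n i else 0 : ℝ)| ^ ((d i : ℝ)⁻¹))
        ≤ K * n := by
      have h2 : c₁ * (⨆ i : Fin m, |(if d i = 1 then g n i else 0 : ℝ)| ^ ((d i : ℝ)⁻¹))
          ≤ C * n := le_trans h1 hn
      have h3 : (⨆ i : Fin m, |(if d i = 1 then g n i else 0 : ℝ)| ^ ((d i : ℝ)⁻¹))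
          ≤ (C / c₁) * n := by
        rw [div_mul_eq_mul_div, le_div_iff₀ hc₁, mul_comm _ c₁]
        exact h2
      exact le_trans h3 (mul_le_mul_of_nonneg_right (le_max_right _ _) (Nat.cast_nonneg n))
    have hi : |(if d i = 1 then g n i else 0 : ℝ)| ^ ((d i : ℝ)⁻¹) ≤ K * n :=
      le_trans (le_ciSup (f := fun i : Fin m => |(if d i = 1 then g n i else 0 : ℝ)| ^ ((d i : ℝ)⁻¹))
        (Set.Finite.bddAbove (Set.finite_range _)) i) hsup
    have h0 : (0:ℝ) ≤ |(if d i = 1 then g n i else 0 : ℝ)| := abs_nonneg _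
    have h4 := pow_le_pow_left₀ (Real.rpow_nonneg h0 _) hi (d i)
    rwa [← Real.rpow_natCast (|(if d i = 1 then g n i else 0 : ℝ)| ^ ((d i : ℝ)⁻¹)) (d i),
      ← Real.rpow_mul h0, inv_mul_cancel₀ (hdne i), Real.rpow_one] at h4
  -- commutator coordinate bound
  have hcomb : ∀ δ : ℝ, 0 < δ → ∀ᶠ n : ℕ in atTop, ∀ i : Fin m, d i ≠ 1 →
      |g n i| ≤ (δ * n) ^ d i := by
    intro δ hδ
    filter_upwards [hcom (δ * c₁) (by positivity)] with n hn i hi1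
    have h1 := (hNx fun i => if d i = 1 then 0 else g n i).1
    have hsup : (⨆ i : Fin m, |(if d i = 1 then 0 else g n i : ℝ)| ^ ((d i : ℝ)⁻¹))
        ≤ δ * n := by
      have h2 : c₁ * (⨆ i : Fin m, |(if d i = 1 then 0 else g n i : ℝ)| ^ ((d i : ℝ)⁻¹))
          ≤ c₁ * (δ * n) := by
        refine le_trans h1 (le_trans hn (le_of_eq (by ring)))
      exact le_of_mul_le_mul_left h2 hc₁
    have hi : |(if d i = 1 then 0 else g n i : ℝ)| ^ ((d i : ℝ)⁻¹) ≤ δ * n :=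
      le_trans (le_ciSup (f := fun i : Fin m => |(if d i = 1 then 0 else g n i : ℝ)| ^ ((d i : ℝ)⁻¹))
        (Set.Finite.bddAbove (Set.finite_range _)) i) hsup
    rw [if_neg hi1] at hi
    have h0 : (0:ℝ) ≤ |g n i| := abs_nonneg _
    have h4 := pow_le_pow_left₀ (Real.rpow_nonneg h0 _) hi (d i)
    rwa [← Real.rpow_natCast (|g n i| ^ ((d i : ℝ)⁻¹)) (d i),
      ← Real.rpow_mul h0, inv_mul_cancel₀ (hdne i), Real.rpow_one] at h4
  intro ε hε
  set ε' : ℝ := ε / c₂ with hε'def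
  have hε' : 0 < ε' := div_pos hε hc₂
  -- per-coordinate key estimate
  have key : ∀ t : Fin m, ∀ᶠ n : ℕ in atTop,
      |mul (-(fun i => if d i = 1 then g n i else 0)) (g n) t| ≤ (ε' * n) ^ d t := by
    intro t
    obtain ⟨P, hPe, hPd⟩ := hpoly t
    set T : ℝ := ∑ μ ∈ P.support, |P.coeff μ| with hTdef
    have hT0 : 0 ≤ T := Finset.sum_nonneg fun _ _ => abs_nonneg _
    set δ : ℝ := min 1 (ε' ^ d t / ((T + 1) * K ^ d t)) with hδdef
    have hδ : 0 < δ := lt_min one_pos (by positivity)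
    have hδ1 : δ ≤ 1 := min_le_left _ _
    filter_upwards [habs, hcomb δ hδ, eventually_ge_atTop 1] with n hA' hc' hn1
    have hn1' : (1:ℝ) ≤ (n:ℝ) := by exact_mod_cast hn1
    have hn0 : (0:ℝ) ≤ (n:ℝ) := by positivity
    set B : ℝ := K * n with hBdef
    have hB1 : (1:ℝ) ≤ B := one_le_mul_of_one_le_of_one_le hK1 hn1'
    set A : Fin m → ℝ := fun i => if d i = 1 then g n i else 0 with hAdef
    set u : Fin m ⊕ Fin m → ℝ := Sum.elim (-A) (g n) with hudef
    set v : Fin m ⊕ Fin m → ℝ := Sum.elim (-A) A with hvdef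
    have hgA : ∀ i, d i = 1 → g n i = A i := fun i h1 => by
      rw [hAdef]; simp [h1]
    have hδn : ∀ i : Fin m, d i ≠ 1 → |g n i| ≤ δ * B ^ d i := by
      intro i h1
      calc |g n i| ≤ (δ * n) ^ d i := hc' i h1
        _ = δ ^ d i * (n:ℝ) ^ d i := mul_pow _ _ _
        _ ≤ δ * (n:ℝ) ^ d i := by
            refine mul_le_mul_of_nonneg_right ?_ (by positivity)
            exact pow_le_of_le_one hδ.le hδ1 (by have := hd i; omega)
        _ ≤ δ * B ^ d i := by
            refine mul_le_mul_of_nonneg_left ?_ hδ.le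
            refine pow_le_pow_left₀ hn0 ?_ _
            rw [hBdef]
            exact le_mul_of_one_le_left hn0 hK1
    have hu : ∀ j, |u j| ≤ B ^ Sum.elim d d j := by
      rintro (i | i)
      · rw [hudef]
        simp only [Sum.elim_inl, Pi.neg_apply, abs_neg, Sum.elim_inl]
        exact hA' i
      · rw [hudef]
        simp only [Sum.elim_inr]
        by_cases h1 : d i = 1
        · rw [hgA i h1]; exact hA' i
        · exact le_trans (hδn i h1)
            (mul_le_of_le_one_left (by positivity) hδ1)
    have huv : ∀ j, u j ≠ v j → v j = 0 ∧ |u j| ≤ δ * B ^ Sum.elim d d j := by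
      rintro (i | i) hne
      · exact absurd rfl hne
      · rw [hudef, hvdef] at hne
        simp only [Sum.elim_inr] at hne
        by_cases h1 : d i = 1
        · exact absurd (hgA i h1) hne
        · refine ⟨?_, ?_⟩
          · rw [hvdef]; simp only [Sum.elim_inr]; rw [hAdef]; simp [h1]
          · rw [hudef]; simp only [Sum.elim_inr]
            exact hδn i h1
    have hv0 : MvPolynomial.eval v P = 0 := by
      have h2 := congrFun (hinv A).2 t
      rw [hPe (-A) A] at h2
      simpa using h2
    have hmain := aux_poly_bound (Sum.elim d d) P (d t) hPd u v δ B hδ.le hδ1 hB1 hu huv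
    rw [hv0, sub_zero] at hmain
    rw [show mul (-A) (g n) t = MvPolynomial.eval u P from hPe (-A) (g n)]
    refine le_trans hmain ?_
    have hδ2 : δ ≤ ε' ^ d t / ((T + 1) * K ^ d t) := min_le_right _ _
    have h4 : δ * ((T + 1) * K ^ d t) ≤ ε' ^ d t :=
      (le_div_iff₀ (by positivity)).1 hδ2
    have h5 : T * (δ * B ^ d t) ≤ ε' ^ d t * (n:ℝ) ^ d t := by
      rw [hBdef, mul_pow]
      have hKp : (0:ℝ) ≤ K ^ d t := by positivity
      have hnp : (0:ℝ) ≤ (n:ℝ) ^ d t := by positivity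
      have h6 : T * (δ * K ^ d t) ≤ ε' ^ d t := by
        nlinarith [h4, mul_nonneg hδ.le hKp]
      calc T * (δ * (K ^ d t * (n:ℝ) ^ d t)) = T * (δ * K ^ d t) * (n:ℝ) ^ d t := by ring
        _ ≤ ε' ^ d t * (n:ℝ) ^ d t := mul_le_mul_of_nonneg_right h6 hnp
    calc T * (δ * B ^ d t) ≤ ε' ^ d t * (n:ℝ) ^ d t := h5
      _ = (ε' * n) ^ d t := (mul_pow _ _ _).symm
  -- assemble
  have keyall : ∀ᶠ n : ℕ in atTop, ∀ t : Fin m,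
      |mul (-(fun i => if d i = 1 then g n i else 0)) (g n) t| ≤ (ε' * n) ^ d t :=
    eventually_all.2 key
  filter_upwards [keyall] with n hn
  have h2 := (hNx (mul (-(fun i => if d i = 1 then g n i else 0)) (g n))).2
  have hεn0 : (0:ℝ) ≤ ε' * n := by positivity
  have hsup : (⨆ i : Fin m,
      |mul (-(fun i => if d i = 1 then g n i else 0)) (g n) i| ^ ((d i : ℝ)⁻¹))
      ≤ ε' * n := by
    rcases isEmpty_or_nonempty (Fin m) with he | he
    · rw [Real.iSup_of_isEmpty]; exact hεn0
    · refine ciSup_le fun i => ?_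
      have hi := hn i
      have h6 := Real.rpow_le_rpow (abs_nonneg _) hi (by positivity : (0:ℝ) ≤ (d i : ℝ)⁻¹)
      rwa [← Real.rpow_natCast (ε' * n) (d i), ← Real.rpow_mul hεn0,
        mul_inv_cancel₀ (hdne i), Real.rpow_one] at h6
  calc N (mul (-(fun i => if d i = 1 then g n i else 0)) (g n))
      ≤ c₂ * (⨆ i : Fin m,
        |mul (-(fun i => if d i = 1 then g n i else 0)) (g n) i| ^ ((d i : ℝ)⁻¹)) := h2
    _ ≤ c₂ * (ε' * n) := mul_le_mul_of_nonneg_left hsup hc₂.le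
    _ = ε * n := by rw [hε'def]; field_simp
end

section
/- Let Γ be a finitely generated torsion-free nilpotent group with asymptotic cone (Carnot group) G_∞ and rescaling maps scl_n : Γ → G_∞ satisfying: whenever scl_{n}(γ_n) → g and scl_{n}(γ'_n) → g' then scl_{n}(γ_n γ'_n) → g ⋆ g'. Let Γ act ergodically by pmp transformations on a probability space (X, m). Fix g ∈ G_∞ and a measurable set A ⊆ X with m(A) > 0. Then for almost every x ∈ A there exist sequences n_k ∈ ℕ and γ_{n_k} ∈ Γ with scl_{n_k}(γ_{n_k}) → g and γ_{n_k}·x ∈ A. -/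
open MeasureTheory Filter Topology

/-- Poincaré recurrence for nilpotent groups: let `Γ` act ergodically
by pmp transformations on a probability space, let `Gc` be its asymptotic cone with
rescaling maps `scl n : Γ → Gc` satisfying the multiplicativity property, fix `g ∈ Gc`
and `A ⊆ X` with `m(A) > 0`. Then for a.e. `x ∈ A` there are sequences `n_k`, `γ_k`
with `scl_{n_k}(γ_{n_k}) → g` and `γ_{n_k}·x ∈ A`. -/
theorem stmt15 {Γ : Type*} [Group Γ] [Countable Γ]
    {X : Type*} [MeasurableSpace X]
    (μ : Measure X) [IsProbabilityMeasure μ]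
    (T : Γ → X → X)
    (hact1 : ∀ x, T 1 x = x)
    (hactmul : ∀ γ₁ γ₂ x, T (γ₁ * γ₂) x = T γ₁ (T γ₂ x))
    (hmeasT : ∀ γ, Measurable (T γ))
    (hmp : ∀ γ, MeasurePreserving (T γ) μ μ)
    (herg : ∀ s : Set X, MeasurableSet s → (∀ γ, T γ ⁻¹' s = s) → μ s = 0 ∨ μ s = 1)
    {Gc : Type*} [Group Gc] [MetricSpace Gc]
    (scl : ℕ → Γ → Gc)
    (hfix : ∀ γ : Γ, Tendsto (fun n => scl n γ) atTop (𝓝 1))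
    (hmulscl : ∀ (g g' : Gc) (γ γ' : ℕ → Γ),
      Tendsto (fun n => scl n (γ n)) atTop (𝓝 g) →
      Tendsto (fun n => scl n (γ' n)) atTop (𝓝 g') →
      Tendsto (fun n => scl n (γ n * γ' n)) atTop (𝓝 (g * g')))
    (hex : ∀ g : Gc, ∃ γ : ℕ → Γ, Tendsto (fun n => scl n (γ n)) atTop (𝓝 g))
    (g : Gc) (A : Set X) (hA : MeasurableSet A) (hApos : 0 < μ A) :
    μ {x ∈ A | ∃ (nk : ℕ → ℕ) (γk : ℕ → Γ),
        Tendsto (fun k => scl (nk k) (γk k)) atTop (𝓝 g) ∧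
        ∀ k, T (γk k) x ∈ A} = μ A := by
  classical
  set S : Set X := {x ∈ A | ∃ (nk : ℕ → ℕ) (γk : ℕ → Γ),
      Tendsto (fun k => scl (nk k) (γk k)) atTop (𝓝 g) ∧
      ∀ k, T (γk k) x ∈ A} with hSdef
  -- bad sets
  set E : ℝ → Set X := fun ε =>
    {x ∈ A | ∀ n γ, dist (scl n γ) g < ε → T γ x ∉ A} with hEdef
  have hEmeas : ∀ ε, MeasurableSet (E ε) := by
    intro ε
    have hrw : E ε = A ∩ ⋂ (n : ℕ) (γ : Γ) (_ : dist (scl n γ) g < ε), T γ ⁻¹' Aᶜ := by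
      ext x
      simp only [hEdef, Set.mem_setOf_eq, Set.mem_inter_iff, Set.mem_iInter,
        Set.mem_preimage, Set.mem_compl_iff]
    rw [hrw]
    exact hA.inter (MeasurableSet.iInter fun n => MeasurableSet.iInter fun γ =>
      MeasurableSet.iInter fun _ => (hmeasT γ) hA.compl)
  have hEsubA : ∀ ε, E ε ⊆ A := fun ε x hx => hx.1
  -- key combinatorial sequence
  have key : ∀ ε : ℝ, 0 < ε → ∃ c : ℕ → Γ,
      ∀ i j, i < j → ∃ n, dist (scl n (c j * (c i)⁻¹)) g < ε := by
    intro ε hε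
    obtain ⟨β, hβ⟩ := hex g
    have step : ∀ s : Finset Γ, ∃ γ : Γ, ∀ δ ∈ s, ∃ n, dist (scl n (γ * δ⁻¹)) g < ε := by
      intro s
      have h : ∀ δ ∈ s, ∀ᶠ n in atTop, dist (scl n (β n * δ⁻¹)) g < ε := by
        intro δ _
        have ht : Tendsto (fun n => scl n (β n * δ⁻¹)) atTop (𝓝 g) := by
          simpa using hmulscl g 1 β (fun _ => δ⁻¹) hβ (hfix δ⁻¹)
        exact (Metric.tendsto_nhds.1 ht) ε hε
      have h2 : ∀ᶠ n in atTop, ∀ δ ∈ s, dist (scl n (β n * δ⁻¹)) g < ε :=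
        (Filter.eventually_all_finset s).2 h
      obtain ⟨n, hn⟩ := h2.exists
      exact ⟨β n, fun δ hδ => ⟨n, hn δ hδ⟩⟩
    choose f hf using step
    let s : ℕ → Finset Γ := fun n => Nat.rec ∅ (fun _ t => insert (f t) t) n
    have hs_step : ∀ n, s n ⊆ s (n + 1) := fun n => Finset.subset_insert _ _
    have hs_le : ∀ m n, m ≤ n → s m ⊆ s n := by
      intro m n hmn
      induction n with
      | zero => simpa [Nat.le_zero.1 hmn] using Finset.Subset.refl _
      | succ k ih =>
        rcases Nat.lt_or_ge m (k + 1) with h | h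
        · exact (ih (Nat.lt_succ_iff.1 h)).trans (hs_step k)
        · have : m = k + 1 := le_antisymm hmn h
          simp [this]
    refine ⟨fun n => f (s n), ?_⟩
    intro i j hij
    have hmem : f (s i) ∈ s j := by
      have h1 : f (s i) ∈ s (i + 1) := Finset.mem_insert_self _ _
      exact hs_le (i + 1) j hij h1
    exact hf (s j) (f (s i)) hmem
  -- each bad set is null
  have hE0 : ∀ ε : ℝ, 0 < ε → μ (E ε) = 0 := by
    intro ε hε
    by_contra h0
    obtain ⟨c, hc⟩ := key ε hε
    have hdisj_lt : ∀ i j : ℕ, i < j → Disjoint (T (c i) ⁻¹' E ε) (T (c j) ⁻¹' E ε) := by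
      intro i j hij
      rw [Set.disjoint_left]
      rintro x hxi hxj
      have hy : T (c i) x ∈ E ε := hxi
      have hz : T (c j) x ∈ E ε := hxj
      obtain ⟨n, hn⟩ := hc i j hij
      have hnotA : T (c j * (c i)⁻¹) (T (c i) x) ∉ A := hy.2 n _ hn
      have : T (c j * (c i)⁻¹) (T (c i) x) = T (c j) x := by
        rw [← hactmul, inv_mul_cancel_right]
      rw [this] at hnotA
      exact hnotA (hEsubA ε hz)
    have hdisj : Pairwise (Function.onFun Disjoint fun i => T (c i) ⁻¹' E ε) := by
      intro i j hij
      rcases lt_or_gt_of_ne hij with h | h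
      · exact hdisj_lt i j h
      · exact (hdisj_lt j i h).symm
    have hmeasPre : ∀ i : ℕ, MeasurableSet (T (c i) ⁻¹' E ε) :=
      fun i => (hmeasT (c i)) (hEmeas ε)
    have hU : μ (⋃ i : ℕ, T (c i) ⁻¹' E ε) = ∑' i : ℕ, μ (T (c i) ⁻¹' E ε) :=
      measure_iUnion hdisj hmeasPre
    have hpre : ∀ i : ℕ, μ (T (c i) ⁻¹' E ε) = μ (E ε) :=
      fun i => (hmp (c i)).measure_preimage (hEmeas ε).nullMeasurableSet
    rw [tsum_congr hpre, ENNReal.tsum_const_eq_top_of_ne_zero h0] at hU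
    exact measure_ne_top μ _ hU
  -- assemble
  have hSsubA : S ⊆ A := fun x hx => hx.1
  have hsub : A \ S ⊆ ⋃ k : ℕ, E (1 / (k + 1)) := by
    rintro x ⟨hxA, hxS⟩
    by_contra hx
    simp only [Set.mem_iUnion, not_exists] at hx
    have hgood : ∀ k : ℕ, ∃ (n : ℕ) (γ : Γ),
        dist (scl n γ) g < 1 / (k + 1) ∧ T γ x ∈ A := by
      intro k
      have := hx k
      simp only [hEdef, Set.mem_setOf_eq, not_and, not_forall] at this
      obtain ⟨n, γ, hd, hTA⟩ := this hxA
      exact ⟨n, γ, hd, not_not.1 hTA⟩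
    choose nk γk hd hTA using hgood
    apply hxS
    refine ⟨hxA, nk, γk, ?_, hTA⟩
    rw [tendsto_iff_dist_tendsto_zero]
    apply squeeze_zero (fun k => dist_nonneg) (fun k => (hd k).le)
    exact tendsto_one_div_add_atTop_nhds_zero_nat
  have hnull : μ (A \ S) = 0 := by
    refine measure_mono_null hsub (measure_iUnion_null fun k => hE0 _ ?_)
    positivity
  have h1 : μ A ≤ μ S := by
    calc μ A = μ (S ∪ (A \ S)) := by
          congr 1
          ext x
          constructor
          · intro hx
            by_cases hxS : x ∈ S
            · exact Or.inl hxS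
            · exact Or.inr ⟨hx, hxS⟩
          · rintro (hx | hx)
            · exact hSsubA hx
            · exact hx.1
      _ ≤ μ S + μ (A \ S) := measure_union_le _ _
      _ = μ S := by rw [hnull, add_zero]
  exact le_antisymm (measure_mono hSsubA) h1
end

section
/- Under the hypotheses of nilpotent Poincaré recurrence, the weak version holds: fix g ∈ G_∞, A ⊆ X with m(A) > 0, and δ > 0. Then m({x ∈ A : ∃ γ ∈ Γ, ∃ n ∈ ℕ with d_∞(scl_n(γ), g) < δ and γ·x ∈ A}) = m(A). Moreover, intersecting over δ = 1/l for l ∈ ℕ, the weak version implies the full recurrence statement. -/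
open MeasureTheory Filter Topology


theorem weak16 {Γ : Type*} [Group Γ] [Countable Γ]
    {X : Type*} [MeasurableSpace X]
    (μ : Measure X) [IsProbabilityMeasure μ]
    (T : Γ → X → X)
    (hactmul : ∀ γ₁ γ₂ x, T (γ₁ * γ₂) x = T γ₁ (T γ₂ x))
    (hmeasT : ∀ γ, Measurable (T γ))
    (hmp : ∀ γ, MeasurePreserving (T γ) μ μ)
    {Gc : Type*} [Group Gc] [MetricSpace Gc]
    (scl : ℕ → Γ → Gc)
    (hfix : ∀ γ : Γ, Tendsto (fun n => scl n γ) atTop (𝓝 1))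
    (hmulscl : ∀ (g g' : Gc) (γ γ' : ℕ → Γ),
      Tendsto (fun n => scl n (γ n)) atTop (𝓝 g) →
      Tendsto (fun n => scl n (γ' n)) atTop (𝓝 g') →
      Tendsto (fun n => scl n (γ n * γ' n)) atTop (𝓝 (g * g')))
    (hex : ∀ g : Gc, ∃ γ : ℕ → Γ, Tendsto (fun n => scl n (γ n)) atTop (𝓝 g))
    (g : Gc) (A : Set X) (hA : MeasurableSet A)
    (δ : ℝ) (hδ : 0 < δ) :
    μ (A \ {x ∈ A | ∃ (γ : Γ) (n : ℕ), dist (scl n γ) g < δ ∧ T γ x ∈ A}) = 0 ∧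
    μ {x ∈ A | ∃ (γ : Γ) (n : ℕ), dist (scl n γ) g < δ ∧ T γ x ∈ A} = μ A := by
  set B := {x ∈ A | ∃ (γ : Γ) (n : ℕ), dist (scl n γ) g < δ ∧ T γ x ∈ A} with hBdef
  have hBA : B ⊆ A := fun x hx => hx.1
  have hBmeas : MeasurableSet B := by
    have : B = A ∩ ⋃ γ : Γ, ⋃ _ : (∃ n, dist (scl n γ) g < δ), (T γ) ⁻¹' A := by
      ext x
      simp only [hBdef, Set.mem_setOf_eq, Set.mem_inter_iff, Set.mem_iUnion, Set.mem_preimage]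
      tauto
    rw [this]
    exact hA.inter (MeasurableSet.iUnion fun γ =>
      MeasurableSet.iUnion fun _ => (hmeasT γ) hA)
  set E := A \ B with hEdef
  have hEmeas : MeasurableSet E := hA.diff hBmeas
  have hE0 : μ E = 0 := by
    by_contra hE
    obtain ⟨c, hc⟩ := hex g
    -- for each γ, eventually dist (scl n (c n * γ⁻¹)) g < δ
    have hNex : ∀ γ : Γ, ∃ N, ∀ n ≥ N, dist (scl n (c n * γ⁻¹)) g < δ := by
      intro γ
      have h1 : Tendsto (fun n => scl n (c n * γ⁻¹)) atTop (𝓝 g) := by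
        have := hmulscl g 1 c (fun _ => γ⁻¹) hc (hfix γ⁻¹)
        simpa using this
      exact Metric.tendsto_atTop.mp h1 δ hδ
    choose N hN using hNex
    set g1 : ℕ → ℕ := fun n => max (n + 1) ((Finset.range (n + 1)).sup fun j => N (c j))
      with hg1
    set M : ℕ → ℕ := fun k => Nat.rec 0 (fun _ ih => g1 ih) k with hM
    have hMsucc : ∀ k, M (k + 1) = g1 (M k) := fun k => rfl
    have hMmono : StrictMono M := by
      apply strictMono_nat_of_lt_succ
      intro k
      rw [hMsucc]
      calc M k < M k + 1 := Nat.lt_succ_self _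
      _ ≤ g1 (M k) := le_max_left _ _
    set γs : ℕ → Γ := fun k => c (M k) with hγs
    have hkey : ∀ i k, i < k → dist (scl (M k) (γs k * (γs i)⁻¹)) g < δ := by
      intro i k hik
      apply hN (γs i) (M k)
      obtain ⟨k', rfl⟩ : ∃ k', k = k' + 1 := ⟨k - 1, by omega⟩
      have hik' : i ≤ k' := Nat.lt_succ_iff.mp hik
      have h1 : M i ≤ M k' := hMmono.monotone hik'
      have h2 : N (c (M i)) ≤ (Finset.range (M k' + 1)).sup fun j => N (c j) :=
        Finset.le_sup (f := fun j => N (c j)) (Finset.mem_range.mpr (Nat.lt_succ_of_le h1))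
      calc N (γs i) ≤ (Finset.range (M k' + 1)).sup (fun j => N (c j)) := h2
      _ ≤ g1 (M k') := le_max_right _ _
      _ = M (k' + 1) := (hMsucc k').symm
    set S : ℕ → Set X := fun k => (T (γs k)) ⁻¹' E with hS
    have hkey2 : ∀ i j, i < j → Disjoint (S i) (S j) := by
      intro i j hij
      rw [Set.disjoint_left]
      rintro x hxi hxj
      have hyE : T (γs i) x ∈ E := hxi
      have hzE : T (γs j) x ∈ E := hxj
      have hyB : T (γs i) x ∈ B := by
        refine ⟨hyE.1, γs j * (γs i)⁻¹, M j, hkey i j hij, ?_⟩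
        have : T (γs j * (γs i)⁻¹) (T (γs i) x) = T (γs j) x := by
          rw [← hactmul]
          group
        rw [this]
        exact hzE.1
      exact hyE.2 hyB
    have hdisj : Pairwise (Function.onFun Disjoint S) := by
      intro i j hij
      rcases hij.lt_or_gt with h | h
      · exact hkey2 i j h
      · exact (hkey2 j i h).symm
    have hSmeas : ∀ k, MeasurableSet (S k) := fun k => (hmeasT (γs k)) hEmeas
    have hSμ : ∀ k, μ (S k) = μ E := fun k =>
      (hmp (γs k)).measure_preimage hEmeas.nullMeasurableSet
    have h1 : μ (⋃ k, S k) = ∑' k : ℕ, μ (S k) := measure_iUnion hdisj hSmeas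
    have h2 : (∑' _ : ℕ, μ E) = ⊤ := ENNReal.tsum_const_eq_top_of_ne_zero hE
    have h3 : μ (⋃ k, S k) ≤ 1 := by
      calc μ (⋃ k, S k) ≤ μ Set.univ := measure_mono (Set.subset_univ _)
      _ = 1 := measure_univ
    rw [h1] at h3
    simp only [hSμ] at h3
    rw [h2] at h3
    exact (ENNReal.one_lt_top.not_ge) (by simpa using h3)
  have hAle : μ A ≤ μ B := by
    calc μ A ≤ μ (B ∪ E) := measure_mono (fun x hx => by
          by_cases h : x ∈ B
          · exact Or.inl h
          · exact Or.inr ⟨hx, h⟩)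
    _ ≤ μ B + μ E := measure_union_le _ _
    _ = μ B := by rw [hE0, add_zero]
  exact ⟨hE0, le_antisymm (measure_mono hBA) hAle⟩

/-- Weak Poincaré recurrence for nilpotent groups, and the fact that
it implies the full recurrence statement: with `Γ` acting by pmp transformations on a
probability space and rescaling maps `scl n : Γ → Gc` into the asymptotic cone
satisfying multiplicativity, for `g ∈ Gc`, `A` with `m(A) > 0` and `δ > 0`:
`m{x ∈ A : ∃ γ, n with d_∞(scl_n(γ), g) < δ and γ·x ∈ A} = m(A)`; moreover
(intersecting over `δ = 1/l`) the full recurrence statement holds. -/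
theorem stmt16 {Γ : Type*} [Group Γ] [Countable Γ]
    {X : Type*} [MeasurableSpace X]
    (μ : Measure X) [IsProbabilityMeasure μ]
    (T : Γ → X → X)
    (hact1 : ∀ x, T 1 x = x)
    (hactmul : ∀ γ₁ γ₂ x, T (γ₁ * γ₂) x = T γ₁ (T γ₂ x))
    (hmeasT : ∀ γ, Measurable (T γ))
    (hmp : ∀ γ, MeasurePreserving (T γ) μ μ)
    {Gc : Type*} [Group Gc] [MetricSpace Gc]
    (scl : ℕ → Γ → Gc)
    (hfix : ∀ γ : Γ, Tendsto (fun n => scl n γ) atTop (𝓝 1))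
    (hmulscl : ∀ (g g' : Gc) (γ γ' : ℕ → Γ),
      Tendsto (fun n => scl n (γ n)) atTop (𝓝 g) →
      Tendsto (fun n => scl n (γ' n)) atTop (𝓝 g') →
      Tendsto (fun n => scl n (γ n * γ' n)) atTop (𝓝 (g * g')))
    (hex : ∀ g : Gc, ∃ γ : ℕ → Γ, Tendsto (fun n => scl n (γ n)) atTop (𝓝 g))
    (g : Gc) (A : Set X) (hA : MeasurableSet A) (hApos : 0 < μ A)
    (δ : ℝ) (hδ : 0 < δ) :
    (μ {x ∈ A | ∃ (γ : Γ) (n : ℕ), dist (scl n γ) g < δ ∧ T γ x ∈ A} = μ A) ∧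
    (μ {x ∈ A | ∃ (nk : ℕ → ℕ) (γk : ℕ → Γ),
        Tendsto (fun k => scl (nk k) (γk k)) atTop (𝓝 g) ∧
        ∀ k, T (γk k) x ∈ A} = μ A) := by
  have hweak := fun (ε : ℝ) (hε : 0 < ε) =>
    weak16 μ T hactmul hmeasT hmp scl hfix hmulscl hex g A hA ε hε
  refine ⟨(hweak δ hδ).2, ?_⟩
  set C := {x ∈ A | ∃ (nk : ℕ → ℕ) (γk : ℕ → Γ),
      Tendsto (fun k => scl (nk k) (γk k)) atTop (𝓝 g) ∧
      ∀ k, T (γk k) x ∈ A} with hCdef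
  set Bf : ℕ → Set X := fun l =>
    {x ∈ A | ∃ (γ : Γ) (n : ℕ), dist (scl n γ) g < 1 / ((l : ℝ) + 1) ∧ T γ x ∈ A} with hBf
  have hBl : ∀ l : ℕ, μ (A \ Bf l) = 0 := fun l =>
    (hweak (1 / ((l : ℝ) + 1)) (by positivity)).1
  set D := A \ ⋃ l : ℕ, (A \ Bf l) with hD
  have hDμ : μ D = μ A := measure_diff_null (measure_iUnion_null hBl)
  have hDC : D ⊆ C := by
    rintro x ⟨hxA, hxU⟩
    simp only [Set.mem_iUnion, not_exists] at hxU
    have hx : ∀ l : ℕ, ∃ (γ : Γ) (n : ℕ),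
        dist (scl n γ) g < 1 / ((l : ℝ) + 1) ∧ T γ x ∈ A := by
      intro l
      have : x ∈ Bf l := by
        by_contra h
        exact hxU l ⟨hxA, h⟩
      exact this.2
    choose γk nk h1 h2 using hx
    refine ⟨hxA, nk, γk, ?_, h2⟩
    rw [tendsto_iff_dist_tendsto_zero]
    apply squeeze_zero (fun k => dist_nonneg) (fun k => (h1 k).le)
    exact tendsto_one_div_add_atTop_nhds_zero_nat
  have hCA : C ⊆ A := fun x hx => hx.1
  exact le_antisymm (measure_mono hCA) (hDμ ▸ measure_mono hDC)
end
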